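/- arXiv:1911.07060 — 2 statements merged into one kernel-verified Lean document; each statement's English description precedes it below -/
import Mathlib

section
/- In the algebra F(m,λ), the derived relation (α₂γ₁α₁)^{m−1} α₂γ₁α₃ = 0 holds, i.e. follows from the defining relations (F1)–(F7). -/
/-!
The algebra `F(m,λ)` of Skowyrski's "Two tilts of higher spherical algebras",
realized as the quotient of the path algebra of the quiver `Q_F` by the
relations (F1)-(F7).  Vertices `1,…,6` are encoded as `0,…,5 : Fin 6`.
The path algebra is presented as the free algebra on the trivial paths
(idempotents) and the arrows, modulo the path-algebra relations
(orthogonal idempotents summing to `1`, source/target compatibility)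
and the relations (F1)-(F7).  Paths compose left to right.
-/

namespace TwoTiltsF

/-- Arrows of `Q_F`: α₁:1→2, α₃:1→6, β₁:1→5, β₃:1→4, α₂:2→3, α₄:6→3,
β₂:5→3, β₄:4→3, γ₁ γ₂:3→1. -/
inductive FArr | a1 | a2 | a3 | a4 | b1 | b2 | b3 | b4 | g1 | g2

/-- Source vertex of an arrow. -/
def FArr.src : FArr → Fin 6
  | .a1 => 0 | .a3 => 0 | .b1 => 0 | .b3 => 0
  | .a2 => 1 | .a4 => 5 | .b2 => 4 | .b4 => 3
  | .g1 => 2 | .g2 => 2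

/-- Target vertex of an arrow. -/
def FArr.tgt : FArr → Fin 6
  | .a1 => 1 | .a3 => 5 | .b1 => 4 | .b3 => 3
  | .a2 => 2 | .a4 => 2 | .b2 => 2 | .b4 => 2
  | .g1 => 0 | .g2 => 0

/-- The free algebra on trivial paths and arrows of `Q_F`. -/
abbrev FFree (K : Type*) [Field K] := FreeAlgebra K (Fin 6 ⊕ FArr)

variable {K : Type*} [Field K]

/-- Trivial path at vertex `i`. -/
def fe (i : Fin 6) : FFree K := FreeAlgebra.ι K (Sum.inl i)
/-- The arrow `a` as an element of the free algebra. -/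
def fa (a : FArr) : FFree K := FreeAlgebra.ι K (Sum.inr a)

def A1 : FFree K := fa .a1
def A2 : FFree K := fa .a2
def A3 : FFree K := fa .a3
def A4 : FFree K := fa .a4
def B1 : FFree K := fa .b1
def B2 : FFree K := fa .b2
def B3 : FFree K := fa .b3
def B4 : FFree K := fa .b4
def G1 : FFree K := fa .g1
def G2 : FFree K := fa .g2

/-- The defining relations of `F(m,λ)`: path algebra relations together
with (F1)-(F7). -/
inductive FRel (K : Type*) [Field K] (m : ℕ) (l : K) : FFree K → FFree K → Prop
  | orth (i j : Fin 6) : FRel K m l (fe i * fe j) (if i = j then fe i else 0)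
  | total : FRel K m l (∑ i, fe i) 1
  | src (a : FArr) : FRel K m l (fe a.src * fa a) (fa a)
  | tgt (a : FArr) : FRel K m l (fa a * fe a.tgt) (fa a)
  | F1a : FRel K m l (A1 * A2 - A3 * A4 + B1 * B2) 0
  | F1b : FRel K m l (A1 * A2 - A3 * A4 + B3 * B4 + l • ((A3 * A4 * G1) ^ (m - 1) * (A3 * A4))) 0
  | F2a : FRel K m l (A2 * G1) (A2 * G2)
  | F2b : FRel K m l (G2 * A1) (G1 * A1)
  | F3a : FRel K m l (A4 * G2) (A4 * G1 + l • ((A4 * G1 * A3) ^ (m - 1) * (A4 * G1)))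
  | F3b : FRel K m l (G2 * A3) (G1 * A3 + l • ((G1 * A3 * A4) ^ (m - 1) * (G1 * A3)))
  | F4a : FRel K m l (B2 * G1) 0
  | F4b : FRel K m l (B4 * G2) 0
  | F4c : FRel K m l (G1 * B1) 0
  | F4d : FRel K m l (G2 * B3) 0
  | F5a : FRel K m l (B2 * G2 * B1 * B2) 0
  | F5b : FRel K m l (B4 * G1 * B3 * B4) 0
  | F6a : FRel K m l (G1 * A1 * A2) (G1 * A3 * A4)
  | F6b : FRel K m l (A1 * A2 * G1) (A3 * A4 * G1)
  | F7a : FRel K m l ((A3 * A4 * G1) ^ m * A1) 0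
  | F7b : FRel K m l ((A3 * A4 * G1) ^ m * A3) 0
  | F7c : FRel K m l (G1 * (A3 * A4 * G1) ^ m) 0
  | F7d : FRel K m l (A2 * (G1 * A3 * A4) ^ m) 0
  | F7e : FRel K m l (A4 * (G1 * A3 * A4) ^ m) 0

/-- The algebra `F(m,λ)`. -/
abbrev FAlg (K : Type*) [Field K] (m : ℕ) (l : K) := RingQuot (FRel K m l)

/-- The canonical projection onto `F(m,λ)`. -/
noncomputable def fq (K : Type*) [Field K] (m : ℕ) (l : K) :
    FFree K →ₐ[K] FAlg K m l := RingQuot.mkAlgHom K (FRel K m l)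

end TwoTiltsF

/-!
Since `α₂γ₁ = α₂γ₂`, relation (F3) multiplied on the left by `α₂` gives
`λ α₂(γ₁α₃α₄)^(m-1)γ₁α₃ = 0`. On the other hand (F6) turns
`(α₂γ₁α₁)^(m-1)α₂ = α₂(γ₁α₁α₂)^(m-1)` into `α₂(γ₁α₃α₄)^(m-1)`.
-/

namespace TwoTiltsF

variable {K : Type*} [Field K] {m : ℕ} {l : K}

theorem fq_eq_of_rel {x y : FFree K} (h : FRel K m l x y) : fq K m l x = fq K m l y :=
  RingQuot.mkAlgHom_rel K h

theorem fq_A2_mul_G1A3A4_pow_mul_G1A3 (hl : l ≠ 0) :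
    fq K m l (A2 * ((G1 * A3 * A4) ^ (m - 1) * (G1 * A3))) = 0 := by
  have hF2 : fq K m l (A2 * (G2 * A3)) = fq K m l (A2 * (G1 * A3)) := by
    rw [← mul_assoc, ← mul_assoc, map_mul, map_mul _ (A2 * G1), fq_eq_of_rel FRel.F2a]
  have hF3 : fq K m l (A2 * (G2 * A3)) = fq K m l (A2 * (G1 * A3)) +
      l • fq K m l (A2 * ((G1 * A3 * A4) ^ (m - 1) * (G1 * A3))) := by
    rw [map_mul, fq_eq_of_rel FRel.F3b, ← map_mul, mul_add, mul_smul_comm, map_add, map_smul]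
  rw [hF2, left_eq_add, smul_eq_zero] at hF3
  exact hF3.resolve_left hl

theorem fq_A2G1A1_pow_mul_A2 (n : ℕ) :
    fq K m l ((A2 * G1 * A1) ^ n * A2) = fq K m l (A2 * (G1 * A3 * A4) ^ n) := by
  rw [mul_assoc A2, mul_pow_mul, map_mul, map_pow, fq_eq_of_rel FRel.F6a,
    ← map_pow, ← map_mul]

end TwoTiltsF

open TwoTiltsF in
theorem F_derived_rel_two_general (K : Type*) [Field K] (m : ℕ)
    (l : K) (hl : l ≠ 0) :
    fq K m l ((A2 * G1 * A1) ^ (m - 1) * (A2 * G1 * A3)) = 0 := by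
  calc fq K m l ((A2 * G1 * A1) ^ (m - 1) * (A2 * G1 * A3))
      = fq K m l ((A2 * G1 * A1) ^ (m - 1) * A2) * fq K m l (G1 * A3) := by
        simp only [← map_mul, mul_assoc]
    _ = fq K m l (A2 * ((G1 * A3 * A4) ^ (m - 1) * (G1 * A3))) := by
        rw [fq_A2G1A1_pow_mul_A2, ← map_mul, mul_assoc]
    _ = 0 := fq_A2_mul_G1A3A4_pow_mul_G1A3 hl

open TwoTiltsF in
/-- In the algebra `F(m,λ)`, the derived relation
`(α₂γ₁α₁)^(m-1) α₂γ₁α₃ = 0` follows from the defining relations (F1)-(F7). -/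
theorem F_derived_rel_two (K : Type*) [Field K] (m : ℕ) (hm : 2 ≤ m)
    (l : K) (hl : l ≠ 0) :
    fq K m l ((A2 * G1 * A1) ^ (m - 1) * (A2 * G1 * A3)) = 0 :=
  F_derived_rel_two_general K m l hl
end

section
/- In the algebra F(m,λ), for any r with 1 ≤ r ≤ m−1 we have (α₃α₄γ₁)^r α₁α₂ = (α₃α₄γ₁)^r α₃α₄, and (α₃α₄γ₁)^r β₁ = 0 = (α₃α₄γ₁)^r β₃ for all r ≥ 1. -/
theorem F_derived_rel_one_aux {K : Type*} [Field K] {R : Type*} [Ring R] [Algebra K R]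
    (l : K) (m : ℕ) (hm : 2 ≤ m)
    (a1 a2 a3 a4 b1 b3 g1 g2 : R)
    (h6a : g1 * a1 * a2 = g1 * a3 * a4)
    (h4c : g1 * b1 = 0)
    (h3a : a4 * g2 = a4 * g1 + l • ((a4 * g1 * a3) ^ (m - 1) * (a4 * g1)))
    (h4d : g2 * b3 = 0)
    (h7b : (a3 * a4 * g1) ^ m * a3 = 0) :
    (∀ r : ℕ, 1 ≤ r → (a3*a4*g1)^r * (a1*a2) = (a3*a4*g1)^r * (a3*a4)) ∧
    (∀ r : ℕ, 1 ≤ r → (a3*a4*g1)^r * b1 = 0 ∧ (a3*a4*g1)^r * b3 = 0) := by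
  simp only [mul_assoc] at h6a h4c h3a h4d h7b ⊢
  have hm1 : m - 1 + 1 = m := by omega
  have key : ∀ (s : ℕ) (y : R),
      (a3*(a4*g1))^(s+1) * y = (a3*(a4*g1))^s * (a3*(a4*(g1*y))) := by
    intro s y
    rw [pow_succ]
    simp only [mul_assoc]
  have h6a' : g1 * (a1*a2) = g1 * (a3*a4) := by
    simp only [← mul_assoc] at h6a ⊢
    exact h6a
  have shift : ∀ k : ℕ, a3 * (a4*(g1*a3))^k = (a3*(a4*g1))^k * a3 := by
    intro k
    induction k with
    | zero => simp
    | succ k ih =>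
      calc a3 * (a4*(g1*a3))^(k+1)
          = (a3*(a4*g1)) * (a3 * (a4*(g1*a3))^k) := by
            rw [pow_succ']; simp only [mul_assoc]
        _ = (a3*(a4*g1)) * ((a3*(a4*g1))^k * a3) := by rw [ih]
        _ = (a3*(a4*g1))^(k+1) * a3 := by
            rw [pow_succ']; simp only [mul_assoc]
  have hb3key : a4*(g1*b3) = -(l • ((a4*(g1*a3))^(m-1) * (a4*(g1*b3)))) := by
    have h1 : (a4*g2)*b3 = (a4*(g1) + l • ((a4*(g1*a3))^(m-1)*(a4*g1)))*b3 := by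
      rw [h3a]
    simp only [add_mul, smul_mul_assoc, mul_assoc, h4d, mul_zero] at h1
    exact eq_neg_of_add_eq_zero_left h1.symm
  have hXX : (a3*(a4*g1))^m * (a3*(a4*g1)) = 0 := by
    rw [← mul_assoc, h7b, zero_mul]
  have hzero : ∀ k : ℕ, (a3*(a4*g1))^(m+1+k) = 0 := by
    intro k
    rw [pow_add, pow_succ, hXX, zero_mul]
  have step : ∀ r : ℕ, (a3*(a4*g1))^(r+1) * b3
      = -(l • ((a3*(a4*g1))^r * ((a3*(a4*g1))^m * b3))) := by
    intro r
    rw [key r b3]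
    conv_lhs => rw [hb3key]
    rw [show a3 * -(l • ((a4*(g1*a3))^(m-1) * (a4*(g1*b3))))
        = -(l • (a3 * ((a4*(g1*a3))^(m-1) * (a4*(g1*b3))))) by
      rw [mul_neg, mul_smul_comm]]
    rw [mul_neg, mul_smul_comm]
    congr 3
    rw [← mul_assoc a3, shift (m-1), mul_assoc ((a3*(a4*g1))^(m-1)) a3,
      ← key (m-1) b3, hm1]
  have hXmb3 : (a3*(a4*g1))^m * b3 = 0 := by
    have h2 := step (m-1)
    rw [hm1] at h2
    have hz : (a3*(a4*g1))^(m-1) * (a3*(a4*g1))^m = 0 := by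
      rw [← pow_add, show m-1+m = m+1+(m-2) by omega, hzero]
    rw [← mul_assoc ((a3*(a4*g1))^(m-1)), hz, zero_mul, smul_zero, neg_zero] at h2
    exact h2
  refine ⟨?_, ?_⟩
  · intro r hr
    obtain ⟨s, rfl⟩ : ∃ s, r = s + 1 := ⟨r - 1, by omega⟩
    rw [key s (a1*a2), key s (a3*a4), h6a']
  · intro r hr
    obtain ⟨s, rfl⟩ : ∃ s, r = s + 1 := ⟨r - 1, by omega⟩
    constructor
    · rw [key s b1, h4c]
      simp
    · rw [step s, hXmb3, mul_zero, smul_zero, neg_zero]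

open TwoTiltsF in
/-- In the algebra `F(m,λ)`: for any `1 ≤ r ≤ m-1` we have
`(α₃α₄γ₁)^r α₁α₂ = (α₃α₄γ₁)^r α₃α₄`, and `(α₃α₄γ₁)^r β₁ = 0 = (α₃α₄γ₁)^r β₃`
for all `r ≥ 1`. -/
theorem F_derived_rel_one (K : Type*) [Field K] (m : ℕ) (hm : 2 ≤ m)
    (l : K) (hl : l ≠ 0) :
    (∀ r : ℕ, 1 ≤ r → r ≤ m - 1 →
      fq K m l ((A3 * A4 * G1) ^ r * (A1 * A2)) =
        fq K m l ((A3 * A4 * G1) ^ r * (A3 * A4))) ∧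
    (∀ r : ℕ, 1 ≤ r →
      fq K m l ((A3 * A4 * G1) ^ r * B1) = 0 ∧
      fq K m l ((A3 * A4 * G1) ^ r * B3) = 0) := by
  have h6a := RingQuot.mkAlgHom_rel K (FRel.F6a (K := K) (m := m) (l := l))
  have h4c := RingQuot.mkAlgHom_rel K (FRel.F4c (K := K) (m := m) (l := l))
  have h3a := RingQuot.mkAlgHom_rel K (FRel.F3a (K := K) (m := m) (l := l))
  have h4d := RingQuot.mkAlgHom_rel K (FRel.F4d (K := K) (m := m) (l := l))
  have h7b := RingQuot.mkAlgHom_rel K (FRel.F7b (K := K) (m := m) (l := l))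
  simp only [map_mul, map_add, map_smul, map_pow, map_zero] at h6a h4c h3a h4d h7b
  have main := F_derived_rel_one_aux l m hm
    ((RingQuot.mkAlgHom K (FRel K m l)) A1) ((RingQuot.mkAlgHom K (FRel K m l)) A2)
    ((RingQuot.mkAlgHom K (FRel K m l)) A3) ((RingQuot.mkAlgHom K (FRel K m l)) A4)
    ((RingQuot.mkAlgHom K (FRel K m l)) B1) ((RingQuot.mkAlgHom K (FRel K m l)) B3)
    ((RingQuot.mkAlgHom K (FRel K m l)) G1) ((RingQuot.mkAlgHom K (FRel K m l)) G2)
    h6a h4c h3a h4d h7b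
  constructor
  · intro r hr _
    simpa only [fq, map_mul, map_pow] using main.1 r hr
  · intro r hr
    have h := main.2 r hr
    exact ⟨by simpa only [fq, map_mul, map_pow] using h.1,
      by simpa only [fq, map_mul, map_pow] using h.2⟩
end
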